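/- There is n0 ∈ ℕ such that the following holds for every n ≥ n0. Let H be a B-free simplicial complex on n vertices in which every edge has size at most 3 and every vertex u satisfies d(u) > (9/8)(n−1) + 5/16. If v is a vertex with ρ(v) = min_{w ∈ V(H)} ρ(w), then the 2-edges of the link L_v are pairwise disjoint and their number is greater than (n−1)/8 + 5/16. -/

import Mathlib

open Finset

/-- `E` is the edge set of a simplicial complex: it is closed under taking subsets. -/
def IsComplex {α : Type*} [DecidableEq α] (E : Finset (Finset α)) : Prop :=
  ∀ e ∈ E, ∀ f ⊆ e, f ∈ E

/-- `H` contains a copy of `F`: an injection of the vertices mapping edges to edges. -/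
def HasCopy {α β : Type*} [DecidableEq β]
    (F : Finset (Finset α)) (H : Finset (Finset β)) : Prop :=
  ∃ f : α → β, Function.Injective f ∧ ∀ e ∈ F, e.image f ∈ H

/-- downward closure of a family of sets -/
def dClosure {α : Type*} [DecidableEq α] (S : Finset (Finset α)) : Finset (Finset α) :=
  S.biUnion Finset.powerset

/-- `ex(n,F)`: the extremal number for simplicial complexes -/
noncomputable def exSC {α : Type*} (n : ℕ) (F : Finset (Finset α)) : ℕ :=
  sSup {m | ∃ E : Finset (Finset (Fin n)), IsComplex E ∧ ¬ HasCopy F E ∧ E.card = m}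

/-- `ex^(k)(n,F)`: the extremal number for `k`-uniform hypergraphs -/
noncomputable def exUnif {α : Type*} (k n : ℕ) (F : Finset (Finset α)) : ℕ :=
  sSup {m | ∃ E : Finset (Finset (Fin n)),
    (∀ e ∈ E, e.card = k) ∧ ¬ HasCopy F E ∧ E.card = m}

/-- the complex `B`: downward closure of `{{v3,v4},{v1,v2,v3},{v1,v4,v5}}`
(vertices `v1,…,v5` are `0,…,4`) -/
def B : Finset (Finset (Fin 5)) :=
  dClosure {{2, 3}, {0, 1, 2}, {0, 3, 4}}

/-- edge set of the link `L_v` -/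
def linkEdges {V : Type*} [DecidableEq V] (E : Finset (Finset V)) (v : V) :
    Finset (Finset V) :=
  (E.filter (fun e => v ∈ e)).image (fun e => e.erase v)

/-- `d^(i)(u)`: number of `i`-edges containing `u` -/
def degI {V : Type*} [DecidableEq V] (E : Finset (Finset V)) (i : ℕ) (u : V) : ℕ :=
  (E.filter (fun e => u ∈ e ∧ e.card = i)).card

/-- `d(u)`: number of edges of size at least 2 containing `u` -/
def dDeg {V : Type*} [DecidableEq V] (E : Finset (Finset V)) (u : V) : ℕ :=
  (E.filter (fun e => u ∈ e ∧ 2 ≤ e.card)).card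

/-- `e` is an isolated 2-edge of the link of `v`: a 2-edge meeting no other 2-edge -/
def IsIsolated2Edge {V : Type*} [DecidableEq V] (E : Finset (Finset V)) (v : V)
    (e : Finset V) : Prop :=
  e ∈ linkEdges E v ∧ e.card = 2 ∧
    ∀ e' ∈ linkEdges E v, e'.card = 2 → e' ≠ e → Disjoint e' e

/-- `e^(2)(L_v)`: number of 2-edges of the link of `v` -/
def e2 {V : Type*} [DecidableEq V] (E : Finset (Finset V)) (v : V) : ℕ :=
  ((linkEdges E v).filter (fun e => e.card = 2)).card

/-- `φ(v)`: number of isolated 2-edges of the link of `v` -/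
def phi {V : Type*} [DecidableEq V] (E : Finset (Finset V)) (v : V) : ℕ :=
  ((linkEdges E v).filter (fun e => e.card = 2 ∧
    ∀ e' ∈ linkEdges E v, e'.card = 2 → e' ≠ e → Disjoint e' e)).card

/-- the parameter `ρ(v) = e^(2)(L_v) + φ(v) − 2` -/
def rho {V : Type*} [DecidableEq V] (E : Finset (Finset V)) (v : V) : ℤ :=
  (e2 E v : ℤ) + (phi E v : ℤ) - 2

section Lemmas

variable {V : Type*} [DecidableEq V]

lemma mem_linkEdges_iff (E : Finset (Finset V)) (u : V) (f : Finset V) :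
    f ∈ linkEdges E u ↔ u ∉ f ∧ insert u f ∈ E := by
  constructor
  · intro hf
    obtain ⟨e, he, rfl⟩ := mem_image.mp hf
    have he' := mem_filter.mp he
    exact ⟨notMem_erase u e, by rw [insert_erase he'.2]; exact he'.1⟩
  · rintro ⟨h1, h2⟩
    exact mem_image.mpr ⟨insert u f, mem_filter.mpr ⟨h2, mem_insert_self u f⟩, erase_insert h1⟩

lemma other_of_pair {e : Finset V} (h : e.card = 2) {x : V} (hx : x ∈ e) :
    ∃ y, y ≠ x ∧ e = {x, y} := by
  obtain ⟨a, b, hab, rfl⟩ := Finset.card_eq_two.mp h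
  rcases Finset.mem_insert.mp hx with rfl | hb
  · exact ⟨b, hab.symm, rfl⟩
  · have : x = b := by simpa using hb
    subst this
    exact ⟨a, hab, by rw [Finset.pair_comm]⟩

lemma e2_eq_degI3 (E : Finset (Finset V)) (u : V) :
    ((linkEdges E u).filter (fun e => e.card = 2)).card = degI E 3 u := by
  classical
  refine Finset.card_bij' (fun f _ => insert u f) (fun e _ => e.erase u) ?_ ?_ ?_ ?_
  · intro f hf
    have h := mem_filter.mp hf
    obtain ⟨h1, h2⟩ := (mem_linkEdges_iff E u f).mp h.1
    refine mem_filter.mpr ⟨h2, mem_insert_self u f, ?_⟩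
    rw [card_insert_of_notMem h1, h.2]
  · intro e he
    have h := mem_filter.mp he
    refine mem_filter.mpr ⟨?_, ?_⟩
    · exact (mem_linkEdges_iff E u _).mpr ⟨notMem_erase u e,
        by rw [insert_erase h.2.1]; exact h.1⟩
    · rw [card_erase_of_mem h.2.1, h.2.2]
  · intro f hf
    exact erase_insert ((mem_linkEdges_iff E u f).mp (mem_filter.mp hf).1).1
  · intro e he
    exact insert_erase (mem_filter.mp he).2.1

lemma dDeg_split (E : Finset (Finset V)) (u : V) (h3 : ∀ e ∈ E, e.card ≤ 3) :
    dDeg E u = degI E 2 u + degI E 3 u := by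
  classical
  unfold dDeg degI
  rw [← Finset.card_union_of_disjoint]
  · congr 1
    rw [← Finset.filter_or]
    apply Finset.filter_congr
    intro e he
    have := h3 e he
    constructor
    · rintro ⟨h1, h2⟩
      rcases Nat.lt_or_ge e.card 3 with h | h
      · exact Or.inl ⟨h1, by omega⟩
      · exact Or.inr ⟨h1, by omega⟩
    · rintro (⟨h1, h2⟩ | ⟨h1, h2⟩) <;> exact ⟨h1, by omega⟩
  · rw [Finset.disjoint_filter]
    rintro e he ⟨-, h2⟩ ⟨-, h3'⟩
    omega

end Lemmas

section BStuff

lemma mkB {n : ℕ} {E : Finset (Finset (Fin n))} (hC : IsComplex E)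
    {p1 p2 p3 p4 p5 : Fin n}
    (h12 : p1 ≠ p2) (h13 : p1 ≠ p3) (h14 : p1 ≠ p4) (h15 : p1 ≠ p5)
    (h23 : p2 ≠ p3) (h24 : p2 ≠ p4) (h25 : p2 ≠ p5)
    (h34 : p3 ≠ p4) (h35 : p3 ≠ p5) (h45 : p4 ≠ p5)
    (hT1 : ({p1, p2, p3} : Finset (Fin n)) ∈ E)
    (hT2 : ({p1, p4, p5} : Finset (Fin n)) ∈ E)
    (hP : ({p3, p4} : Finset (Fin n)) ∈ E) :
    HasCopy B E := by
  refine ⟨![p1, p2, p3, p4, p5], ?_, ?_⟩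
  · intro i j hij
    fin_cases i <;> fin_cases j <;> simp_all
  · intro e heB
    have hmem : ∃ g ∈ ({({2, 3} : Finset (Fin 5)), {0, 1, 2}, {0, 3, 4}} :
        Finset (Finset (Fin 5))), e ⊆ g := by
      simpa [B, dClosure, Finset.mem_biUnion] using heB
    obtain ⟨g, hg, hsub⟩ := hmem
    have himg : e.image ![p1, p2, p3, p4, p5] ⊆ g.image ![p1, p2, p3, p4, p5] :=
      Finset.image_subset_image hsub
    have hgE : g.image ![p1, p2, p3, p4, p5] ∈ E := by
      simp only [Finset.mem_insert, Finset.mem_singleton] at hg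
      rcases hg with rfl | rfl | rfl
      · simpa [Finset.image_insert] using hP
      · simpa [Finset.image_insert] using hT1
      · simpa [Finset.image_insert] using hT2
    exact hC _ hgE _ himg

end BStuff

section Counting

variable {V : Type*} [DecidableEq V]

lemma L2 (C : Finset (Finset V)) (hcard : ∀ e ∈ C, e.card = 2)
    (hint : ∀ e ∈ C, ∀ f ∈ C, (e ∩ f).Nonempty) :
    C.card ≤ (C.biUnion id).card := by
  classical
  rcases C.eq_empty_or_nonempty with rfl | ⟨f0, hf0⟩
  · simp
  by_cases hcom : ∃ x, ∀ e ∈ C, x ∈ e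
  · obtain ⟨x, hx⟩ := hcom
    have hne : ∀ e ∈ C, (e.erase x).Nonempty := by
      intro e he
      rw [← Finset.card_pos, Finset.card_erase_of_mem (hx e he), hcard e he]
      norm_num
    set pick : Finset V → V := fun e =>
      if h : (e.erase x).Nonempty then h.choose else x with hpick
    have hpick_mem : ∀ e ∈ C, pick e ∈ e.erase x := by
      intro e he
      simp only [hpick, dif_pos (hne e he)]
      exact (hne e he).choose_spec
    have hrep : ∀ e ∈ C, e = {x, pick e} := by
      intro e he
      obtain ⟨y, hyx, hey⟩ := other_of_pair (hcard e he) (hx e he)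
      have h1 := Finset.mem_erase.mp (hpick_mem e he)
      subst hey
      have h2 : pick {x, y} = x ∨ pick {x, y} = y := by
        have := h1.2
        simpa using this
      have h3 : pick {x, y} = y := by tauto
      rw [h3]
    apply Finset.card_le_card_of_injOn pick
    · intro e he
      exact Finset.mem_biUnion.mpr ⟨e, he, (Finset.mem_erase.mp (hpick_mem e he)).2⟩
    · intro e he f hf hef
      rw [hrep e he, hrep f hf, hef]
  · push_neg at hcom
    obtain ⟨α, β, hαβ, hf0eq⟩ := Finset.card_eq_two.mp (hcard f0 hf0)
    obtain ⟨g, hgC, hαg⟩ := hcom α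
    have hβg : β ∈ g := by
      obtain ⟨t, ht⟩ := hint f0 hf0 g hgC
      have ht' := Finset.mem_inter.mp ht
      have : t = α ∨ t = β := by
        have := ht'.1; rw [hf0eq] at this; simpa using this
      rcases this with rfl | rfl
      · exact absurd ht'.2 hαg
      · exact ht'.2
    obtain ⟨z, hzβ, hgeq⟩ := other_of_pair (hcard g hgC) hβg
    have hzα : z ≠ α := by
      rintro rfl
      exact hαg (by rw [hgeq]; simp)
    obtain ⟨h, hhC, hβh⟩ := hcom β
    have hαh : α ∈ h := by
      obtain ⟨t, ht⟩ := hint f0 hf0 h hhC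
      have ht' := Finset.mem_inter.mp ht
      have : t = α ∨ t = β := by
        have := ht'.1; rw [hf0eq] at this; simpa using this
      rcases this with rfl | rfl
      · exact ht'.2
      · exact absurd ht'.2 hβh
    have hzh : z ∈ h := by
      obtain ⟨t, ht⟩ := hint g hgC h hhC
      have ht' := Finset.mem_inter.mp ht
      have : t = β ∨ t = z := by
        have := ht'.1; rw [hgeq] at this; simpa using this
      rcases this with rfl | rfl
      · exact absurd ht'.2 hβh
      · exact ht'.2
    have hhrep : h = {α, z} := by
      obtain ⟨s', hs'α, hhe⟩ := other_of_pair (hcard h hhC) hαh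
      have : z = α ∨ z = s' := by
        have := hzh; rw [hhe] at this; simpa using this
      rcases this with rfl | rfl
      · exact absurd rfl hzα
      · exact hhe
    -- every k in C is contained in {α, β, z}
    have hksub : ∀ k ∈ C, k ⊆ ({α, β, z} : Finset V) := by
      intro k hkC
      intro w hw
      by_contra hwmem
      simp only [Finset.mem_insert, Finset.mem_singleton, not_or] at hwmem
      obtain ⟨hwα, hwβ, hwz⟩ := hwmem
      obtain ⟨s, hsw, hkeq⟩ := other_of_pair (hcard k hkC) hw
      have hs1 : s = α ∨ s = β := by
        obtain ⟨t, ht⟩ := hint k hkC f0 hf0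
        have ht' := Finset.mem_inter.mp ht
        have htk : t = w ∨ t = s := by
          have := ht'.1; rw [hkeq] at this; simpa using this
        have htf : t = α ∨ t = β := by
          have := ht'.2; rw [hf0eq] at this; simpa using this
        rcases htk with rfl | rfl
        · tauto
        · exact htf
      have hs2 : s = β ∨ s = z := by
        obtain ⟨t, ht⟩ := hint k hkC g hgC
        have ht' := Finset.mem_inter.mp ht
        have htk : t = w ∨ t = s := by
          have := ht'.1; rw [hkeq] at this; simpa using this
        have htf : t = β ∨ t = z := by
          have := ht'.2; rw [hgeq] at this; simpa using this
        rcases htk with rfl | rfl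
        · tauto
        · exact htf
      have hs3 : s = α ∨ s = z := by
        obtain ⟨t, ht⟩ := hint k hkC h hhC
        have ht' := Finset.mem_inter.mp ht
        have htk : t = w ∨ t = s := by
          have := ht'.1; rw [hkeq] at this; simpa using this
        have htf : t = α ∨ t = z := by
          have := ht'.2; rw [hhrep] at this; simpa using this
        rcases htk with rfl | rfl
        · tauto
        · exact htf
      rcases hs1 with rfl | rfl
      · rcases hs2 with h' | h' <;> [exact hαβ h'; exact hzα h'.symm]
      · rcases hs3 with h' | h' <;> [exact hαβ h'.symm; exact hzβ h'.symm]
    have hCsub : C ⊆ Finset.powersetCard 2 ({α, β, z} : Finset V) := by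
      intro k hk
      exact Finset.mem_powersetCard.mpr ⟨hksub k hk, hcard k hk⟩
    have hcardαβz : ({α, β, z} : Finset V).card = 3 := by
      rw [Finset.card_insert_of_notMem (by simp [hαβ, Ne.symm hzα]),
        Finset.card_insert_of_notMem (by simp [Ne.symm hzβ]), Finset.card_singleton]
    calc C.card ≤ (Finset.powersetCard 2 ({α, β, z} : Finset V)).card :=
          Finset.card_le_card hCsub
      _ = 3 := by rw [Finset.card_powersetCard, hcardαβz]; decide
      _ ≤ (C.biUnion id).card := by
          apply le_trans (le_of_eq hcardαβz.symm)
          apply Finset.card_le_card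
          intro t ht
          simp only [Finset.mem_insert, Finset.mem_singleton] at ht
          rcases ht with rfl | rfl | rfl
          · exact Finset.mem_biUnion.mpr ⟨f0, hf0, by rw [hf0eq]; simp⟩
          · exact Finset.mem_biUnion.mpr ⟨f0, hf0, by rw [hf0eq]; simp⟩
          · exact Finset.mem_biUnion.mpr ⟨g, hgC, by rw [hgeq]; simp⟩

end Counting

lemma L1 {V : Type*} [DecidableEq V] : ∀ (N : ℕ) (S : Finset (Finset V)), S.card ≤ N →
    (∀ e ∈ S, e.card = 2) →
    (∀ e ∈ S, ∀ f ∈ S, ∀ g ∈ S, (e ∩ f).Nonempty → (f ∩ g).Nonempty → (e ∩ g).Nonempty) →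
    S.card + (S.filter (fun e => ∀ f ∈ S, f ≠ e → Disjoint f e)).card ≤ (S.biUnion id).card := by
  classical
  intro N
  induction N with
  | zero =>
    intro S hS _ _
    have : S = ∅ := Finset.card_eq_zero.mp (Nat.le_zero.mp hS)
    subst this
    simp
  | succ N ih =>
    intro S hS hcard htrans
    rcases S.eq_empty_or_nonempty with rfl | ⟨e, he⟩
    · simp
    set C := S.filter (fun f => (f ∩ e).Nonempty) with hC
    set S' := S.filter (fun f => ¬ (f ∩ e).Nonempty) with hS'
    have heC : e ∈ C := by
      refine Finset.mem_filter.mpr ⟨he, ?_⟩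
      rw [Finset.inter_self]
      rw [← Finset.card_pos, hcard e he]
      norm_num
    have hCS : C ∪ S' = S := Finset.filter_union_filter_not_eq _ S
    have hCS'disj : Disjoint C S' := Finset.disjoint_filter_filter_not S S _
    have hS'sub : S' ⊆ S := Finset.filter_subset _ S
    have hCsub : C ⊆ S := Finset.filter_subset _ S
    have hS'lt : S'.card ≤ N := by
      have : S' ⊂ S := by
        refine Finset.ssubset_iff_of_subset hS'sub |>.mpr ⟨e, he, ?_⟩
        intro hmem
        exact (Finset.mem_filter.mp hmem).2 (Finset.mem_filter.mp heC).2
      have := Finset.card_lt_card this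
      omega
    -- pairwise intersecting inside C
    have hCint : ∀ f ∈ C, ∀ g ∈ C, (f ∩ g).Nonempty := by
      intro f hf g hg
      have hf' := Finset.mem_filter.mp hf
      have hg' := Finset.mem_filter.mp hg
      have heg : (e ∩ g).Nonempty := by
        obtain ⟨t, ht⟩ := hg'.2
        exact ⟨t, by rw [Finset.mem_inter] at ht ⊢; tauto⟩
      exact htrans f hf'.1 e he g hg'.1 hf'.2 heg
    -- C and S' have disjoint members
    have hdisjCS' : ∀ f ∈ C, ∀ g ∈ S', Disjoint f g := by
      intro f hf g hg
      have hf' := Finset.mem_filter.mp hf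
      have hg' := Finset.mem_filter.mp hg
      rw [Finset.disjoint_left]
      intro t htf htg
      apply hg'.2
      apply htrans g hg'.1 f hf'.1 e he ⟨t, Finset.mem_inter.mpr ⟨htg, htf⟩⟩ hf'.2
    -- biUnion splits
    have hbUeq : S.biUnion id = C.biUnion id ∪ S'.biUnion id := by
      ext t
      simp only [Finset.mem_biUnion, Finset.mem_union, id]
      constructor
      · rintro ⟨f, hf, ht⟩
        rcases Finset.mem_union.mp (hCS ▸ hf : f ∈ C ∪ S') with h' | h'
        · exact Or.inl ⟨f, h', ht⟩
        · exact Or.inr ⟨f, h', ht⟩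
      · rintro (⟨f, hf, ht⟩ | ⟨f, hf, ht⟩)
        · exact ⟨f, hCsub hf, ht⟩
        · exact ⟨f, hS'sub hf, ht⟩
    have hbiU : (S.biUnion id).card = (C.biUnion id).card + (S'.biUnion id).card := by
      rw [hbUeq]
      apply Finset.card_union_of_disjoint
      rw [Finset.disjoint_left]
      intro t ht ht'
      obtain ⟨f, hf, htf⟩ := Finset.mem_biUnion.mp ht
      obtain ⟨g, hg, htg⟩ := Finset.mem_biUnion.mp ht'
      exact (Finset.disjoint_left.mp (hdisjCS' f hf g hg)) htf htg
    -- filter splits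
    set isoS := fun f => ∀ g ∈ S, g ≠ f → Disjoint g f with hisoS
    have hfsplit : (S.filter isoS).card = (C.filter isoS).card + (S'.filter isoS).card := by
      have hequ : S.filter isoS = (C.filter isoS) ∪ (S'.filter isoS) := by
        ext f
        simp only [Finset.mem_filter, Finset.mem_union]
        constructor
        · rintro ⟨hf, hiso⟩
          rcases Finset.mem_union.mp (hCS ▸ hf : f ∈ C ∪ S') with h' | h'
          · exact Or.inl ⟨h', hiso⟩
          · exact Or.inr ⟨h', hiso⟩
        · rintro (⟨hf, hiso⟩ | ⟨hf, hiso⟩)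
          · exact ⟨hCsub hf, hiso⟩
          · exact ⟨hS'sub hf, hiso⟩
      rw [hequ]
      exact Finset.card_union_of_disjoint (Finset.disjoint_filter_filter hCS'disj)
    have hfS' : S'.filter isoS = S'.filter (fun f => ∀ g ∈ S', g ≠ f → Disjoint g f) := by
      apply Finset.filter_congr
      intro f hf
      constructor
      · intro hiso g hg hgf
        exact hiso g (hS'sub hg) hgf
      · intro hiso g hg hgf
        rcases Finset.mem_union.mp (hCS ▸ hg) with hgC | hgS'
        · exact hdisjCS' g hgC f hf
        · exact hiso g hgS' hgf
    have hcards : S.card = C.card + S'.card := by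
      have := Finset.card_union_of_disjoint hCS'disj
      rw [hCS] at this
      exact this
    have IH := ih S' hS'lt (fun f hf => hcard f (hS'sub hf))
      (fun a ha b hb c hc => htrans a (hS'sub ha) b (hS'sub hb) c (hS'sub hc))
    rcases Nat.lt_or_ge C.card 2 with hC1 | hC2
    · -- C = {e}
      have hCe : C = {e} := by
        have : C.card = 1 := by
          have : 0 < C.card := Finset.card_pos.mpr ⟨e, heC⟩
          omega
        obtain ⟨a, ha⟩ := Finset.card_eq_one.mp this
        rw [ha] at heC ⊢
        simp only [Finset.mem_singleton] at heC
        rw [heC]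
      have hiso_e : isoS e := by
        intro g hg hge
        rcases Finset.mem_union.mp (hCS ▸ hg) with hgC | hgS'
        · rw [hCe] at hgC
          simp only [Finset.mem_singleton] at hgC
          exact absurd hgC hge
        · exact (hdisjCS' e heC g hgS').symm
      have h1 : (C.filter isoS).card = 1 := by
        rw [hCe, Finset.filter_singleton, if_pos hiso_e, Finset.card_singleton]
      have h2 : (C.biUnion id).card = 2 := by
        rw [hCe, Finset.singleton_biUnion]
        exact hcard e he
      rw [hcards, hfsplit, hbiU, h1, h2, hCe, Finset.card_singleton, hfS']
      omega
    · -- C has at least 2 elements: no isolated edges in C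
      have h1 : C.filter isoS = ∅ := by
        rw [Finset.filter_eq_empty_iff]
        intro f hf hiso
        obtain ⟨g, hg, hgf⟩ := Finset.exists_mem_ne hC2 f
        have := hCint g hg f hf
        exact Finset.not_disjoint_iff.mpr (by
          obtain ⟨t, ht⟩ := this
          have ht' := Finset.mem_inter.mp ht
          exact ⟨t, ht'.1, ht'.2⟩) (hiso g (hCsub hg) hgf)
      have h2 : C.card ≤ (C.biUnion id).card :=
        L2 C (fun f hf => hcard f (hCsub hf)) hCint
      rw [hcards, hfsplit, hbiU, h1, hfS']
      simp only [Finset.card_empty]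
      omega

section FreeLemmas

variable {n : ℕ} {E : Finset (Finset (Fin n))}

lemma pair_perm3 {x y z : Fin n} : ({x, y, z} : Finset (Fin n)) = {x, z, y} := by
  ext t; simp; tauto

lemma sub_pair_mem (hC : IsComplex E) {x y z : Fin n}
    (h : ({x, y, z} : Finset (Fin n)) ∈ E) : ({x, y} : Finset (Fin n)) ∈ E := by
  apply hC _ h
  intro t ht
  simp only [Finset.mem_insert, Finset.mem_singleton] at ht ⊢
  tauto

lemma claim4 (hC : IsComplex E) (hB : ¬ HasCopy B E)
    {v a b c z w : Fin n}
    (hva : v ≠ a) (hvb : v ≠ b) (hvc : v ≠ c) (hab : a ≠ b) (hac : a ≠ c) (hbc : b ≠ c)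
    (hE1 : ({v, a, b} : Finset (Fin n)) ∈ E) (hE2 : ({v, a, c} : Finset (Fin n)) ∈ E)
    (hzv : z ≠ v) (hza : z ≠ a) (hzb : z ≠ b) (hzc : z ≠ c) (hzw : z ≠ w) (hwc : w ≠ c)
    (hT : ({c, z, w} : Finset (Fin n)) ∈ E) (hvz : ({v, z} : Finset (Fin n)) ∈ E) :
    False := by
  have hacE : ({a, c} : Finset (Fin n)) ∈ E := by
    have : ({a, c} : Finset (Fin n)) ⊆ {v, a, c} := by
      intro t ht; simp only [Finset.mem_insert, Finset.mem_singleton] at ht ⊢; tauto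
    exact hC _ hE2 _ this
  have hvcE : ({v, c} : Finset (Fin n)) ∈ E := by
    have hperm : ({v, c, a} : Finset (Fin n)) = {v, a, c} := by ext t; simp; tauto
    exact sub_pair_mem hC (hperm ▸ hE2)
  by_cases hw1 : w = v
  · rw [hw1] at hT
    -- T = {c, z, v}; use p1=v, p2=b, p3=a, p4=c, p5=z
    apply hB
    have hT2 : ({v, c, z} : Finset (Fin n)) ∈ E := by
      have : ({c, z, v} : Finset (Fin n)) = {v, c, z} := by ext t; simp; tauto
      rwa [this] at hT
    have hT1 : ({v, b, a} : Finset (Fin n)) ∈ E := by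
      have : ({v, a, b} : Finset (Fin n)) = {v, b, a} := by ext t; simp; tauto
      rwa [this] at hE1
    exact mkB hC hvb hva hvc hzv.symm (Ne.symm hab) hbc (fun h => hzb h.symm)
      hac hza.symm hzc.symm hT1 hT2 hacE
  by_cases hw2 : w = a
  · rw [hw2] at hT
    -- T = {c, z, a}; use p1=a, p2=b, p3=v, p4=c, p5=z
    apply hB
    have hT2 : ({a, c, z} : Finset (Fin n)) ∈ E := by
      have : ({c, z, a} : Finset (Fin n)) = {a, c, z} := by ext t; simp; tauto
      rwa [this] at hT
    have hT1 : ({a, b, v} : Finset (Fin n)) ∈ E := by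
      have : ({v, a, b} : Finset (Fin n)) = {a, b, v} := by ext t; simp; tauto
      rwa [this] at hE1
    exact mkB hC hab (Ne.symm hva) hac hza.symm hvb.symm hbc (fun h => hzb h.symm)
      hvc hzv.symm hzc.symm hT1 hT2 hvcE
  by_cases hw3 : w = b
  · rw [hw3] at hT
    -- T = {c, z, b}; use p1=b, p2=v, p3=a, p4=c, p5=z
    apply hB
    have hT2 : ({b, c, z} : Finset (Fin n)) ∈ E := by
      have : ({c, z, b} : Finset (Fin n)) = {b, c, z} := by ext t; simp; tauto
      rwa [this] at hT
    have hT1 : ({b, v, a} : Finset (Fin n)) ∈ E := by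
      have : ({v, a, b} : Finset (Fin n)) = {b, v, a} := by ext t; simp; tauto
      rwa [this] at hE1
    exact mkB hC (Ne.symm hvb) (Ne.symm hab) hbc (fun h => hzb h.symm)
      hva hvc hzv.symm hac hza.symm hzc.symm hT1 hT2 hacE
  · -- w ∉ {v, a, b}; use p1=c, p2=a, p3=v, p4=z, p5=w
    apply hB
    have hT1 : ({c, a, v} : Finset (Fin n)) ∈ E := by
      have : ({v, a, c} : Finset (Fin n)) = {c, a, v} := by ext t; simp; tauto
      rwa [this] at hE2
    have hT2 : ({c, z, w} : Finset (Fin n)) ∈ E := hT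
    exact mkB hC (Ne.symm hac) (Ne.symm hvc) (Ne.symm hzc) (Ne.symm hwc) (Ne.symm hva)
      (Ne.symm hza) (fun h => hw2 h.symm) (Ne.symm hzv) (fun h => hw1 h.symm) hzw hT1 hT2 hvz

lemma link_trans (hC : IsComplex E) (hB : ¬ HasCopy B E) (c : Fin n) :
    ∀ e ∈ (linkEdges E c).filter (fun e => e.card = 2),
    ∀ f ∈ (linkEdges E c).filter (fun e => e.card = 2),
    ∀ g ∈ (linkEdges E c).filter (fun e => e.card = 2),
    (e ∩ f).Nonempty → (f ∩ g).Nonempty → (e ∩ g).Nonempty := by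
  intro e he f hf g hg h1 h2
  by_contra h3
  have hdis : ∀ t : Fin n, t ∈ e → t ∈ g → False := fun t ht ht' =>
    h3 ⟨t, Finset.mem_inter.mpr ⟨ht, ht'⟩⟩
  obtain ⟨x, hx⟩ := h1
  obtain ⟨y, hy⟩ := h2
  have hx' := Finset.mem_inter.mp hx
  have hy' := Finset.mem_inter.mp hy
  have hxy : x ≠ y := by
    rintro rfl
    exact hdis x hx'.1 hy'.2
  have he' := Finset.mem_filter.mp he
  have hf' := Finset.mem_filter.mp hf
  have hg' := Finset.mem_filter.mp hg
  obtain ⟨hce, hceE⟩ := (mem_linkEdges_iff E c e).mp he'.1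
  obtain ⟨hcf, hcfE⟩ := (mem_linkEdges_iff E c f).mp hf'.1
  obtain ⟨hcg, hcgE⟩ := (mem_linkEdges_iff E c g).mp hg'.1
  have hfeq : f = {x, y} := by
    symm
    apply Finset.eq_of_subset_of_card_le
    · intro t ht
      simp only [Finset.mem_insert, Finset.mem_singleton] at ht
      rcases ht with rfl | rfl
      · exact hx'.2
      · exact hy'.1
    · rw [hf'.2, Finset.card_insert_of_notMem (by simpa using hxy), Finset.card_singleton]
  obtain ⟨p2, hp2x, heeq⟩ := other_of_pair he'.2 hx'.1
  obtain ⟨p5, hp5y, hgeq⟩ := other_of_pair hg'.2 hy'.2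
  have hp2e : p2 ∈ e := by rw [heeq]; simp
  have hp5g : p5 ∈ g := by rw [hgeq]; simp
  have hxe : x ∈ e := hx'.1
  have hyg : y ∈ g := hy'.2
  apply hB
  have hT1 : ({c, p2, x} : Finset (Fin n)) ∈ E := by
    have : ({c, p2, x} : Finset (Fin n)) = insert c e := by
      rw [heeq]; ext t; simp; tauto
    rw [this]; exact hceE
  have hT2 : ({c, y, p5} : Finset (Fin n)) ∈ E := by
    have : ({c, y, p5} : Finset (Fin n)) = insert c g := by
      rw [hgeq]
    rw [this]; exact hcgE
  have hP : ({x, y} : Finset (Fin n)) ∈ E := by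
    rw [← hfeq]
    exact hC _ hcfE _ (Finset.subset_insert c f)
  -- p1=c, p2=p2, p3=x, p4=y, p5=p5
  exact mkB hC
    (fun h => hce (by rw [h]; exact hp2e)) (fun h => hce (by rw [h]; exact hxe))
    (fun h => hcg (by rw [h]; exact hyg)) (fun h => hcg (by rw [h]; exact hp5g))
    hp2x (fun h => hdis p2 hp2e (by rw [h]; exact hyg))
    (fun h => hdis p2 hp2e (by rw [h]; exact hp5g)) hxy
    (fun h => hdis x hxe (by rw [h]; exact hp5g))
    (Ne.symm hp5y) hT1 hT2 hP

end FreeLemmas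

lemma degI2_eq {n : ℕ} (E : Finset (Finset (Fin n))) (v : Fin n) :
    degI E 2 v = ((univ.erase v).filter (fun x => ({v, x} : Finset (Fin n)) ∈ E)).card := by
  classical
  symm
  apply Finset.card_nbij (fun x => ({v, x} : Finset (Fin n)))
  · intro x hx
    have hx' := Finset.mem_filter.mp hx
    have hxv : x ≠ v := (Finset.mem_erase.mp hx'.1).1
    refine Finset.mem_filter.mpr ⟨hx'.2, Finset.mem_insert_self v _, ?_⟩
    rw [Finset.card_insert_of_notMem (by simpa using Ne.symm hxv), Finset.card_singleton]
  · intro x hx y hy hxy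
    simp only [Finset.coe_filter, Set.mem_setOf_eq] at hx hy
    have hxv : x ≠ v := (Finset.mem_erase.mp hx.1).1
    simp only at hxy
    have : x ∈ ({v, y} : Finset (Fin n)) := by rw [← hxy]; simp
    simp only [Finset.mem_insert, Finset.mem_singleton] at this
    tauto
  · intro e he
    simp only [Finset.coe_filter, Set.mem_setOf_eq] at he
    obtain ⟨heE, hve, hc2⟩ := he
    obtain ⟨y, hyv, heeq⟩ := other_of_pair hc2 hve
    refine ⟨y, ?_, heeq.symm⟩
    simp only [Finset.coe_filter, Set.mem_setOf_eq]
    refine ⟨Finset.mem_erase.mpr ⟨hyv, Finset.mem_univ y⟩, by rw [← heeq]; exact heE⟩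

lemma phi_le {V : Type*} [DecidableEq V] (E : Finset (Finset V)) (c : V)
    (htrans : ∀ e ∈ (linkEdges E c).filter (fun e => e.card = 2),
      ∀ f ∈ (linkEdges E c).filter (fun e => e.card = 2),
      ∀ g ∈ (linkEdges E c).filter (fun e => e.card = 2),
      (e ∩ f).Nonempty → (f ∩ g).Nonempty → (e ∩ g).Nonempty) :
    e2 E c + phi E c ≤
      ((((linkEdges E c).filter (fun e => e.card = 2)).biUnion id)).card := by
  have h := L1 ((linkEdges E c).filter (fun e => e.card = 2)).card
    ((linkEdges E c).filter (fun e => e.card = 2)) le_rfl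
    (fun e' he' => (Finset.mem_filter.mp he').2) htrans
  refine le_trans (le_of_eq ?_) h
  congr 1
  unfold phi
  congr 1
  ext e0
  simp only [Finset.mem_filter]
  constructor
  · rintro ⟨h1, h2, h3⟩
    exact ⟨⟨h1, h2⟩, fun f' hf' hne => h3 f' hf'.1 hf'.2 hne⟩
  · rintro ⟨⟨h1, h2⟩, h3⟩
    exact ⟨h1, h2, fun e' he' hc2 hne => h3 e' ⟨he', hc2⟩ hne⟩


theorem statement15 : ∃ n0 : ℕ, ∀ n : ℕ, n0 ≤ n → ∀ E : Finset (Finset (Fin n)),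
    IsComplex E → ¬ HasCopy B E →
    (∀ e ∈ E, e.card ≤ 3) →
    (∀ u : Fin n, (dDeg E u : ℝ) > 9 / 8 * ((n : ℝ) - 1) + 5 / 16) →
    ∀ v : Fin n, (∀ w : Fin n, rho E v ≤ rho E w) →
      (∀ e ∈ linkEdges E v, ∀ e' ∈ linkEdges E v,
        e.card = 2 → e'.card = 2 → e ≠ e' → Disjoint e e') ∧
      (((linkEdges E v).filter (fun e => e.card = 2)).card : ℝ) >
        ((n : ℝ) - 1) / 8 + 5 / 16 := by
  use 100
  intro n hn E hC hB h3 hdeg v hmin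
  have hn1 : (1 : ℕ) ≤ n := le_trans (by norm_num) hn
  have he2v : ((linkEdges E v).filter (fun e => e.card = 2)).card = degI E 3 v :=
    e2_eq_degI3 E v
  have hdd : dDeg E v = degI E 2 v + degI E 3 v := dDeg_split E v h3
  have hd2v : degI E 2 v ≤ n - 1 := by
    rw [degI2_eq]
    calc ((univ.erase v).filter (fun x => ({v, x} : Finset (Fin n)) ∈ E)).card
        ≤ (univ.erase v).card := Finset.card_le_card (Finset.filter_subset _ _)
      _ = n - 1 := by
          rw [Finset.card_erase_of_mem (Finset.mem_univ v), Finset.card_univ,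
            Fintype.card_fin]
  have hprt2 : (((linkEdges E v).filter (fun e => e.card = 2)).card : ℝ) >
      ((n : ℝ) - 1) / 8 + 5 / 16 := by
    have h := hdeg v
    have hc1 : ((degI E 2 v : ℕ) : ℝ) ≤ (n : ℝ) - 1 := by
      have h' : ((degI E 2 v : ℕ) : ℝ) ≤ ((n - 1 : ℕ) : ℝ) := by exact_mod_cast hd2v
      rwa [Nat.cast_sub hn1, Nat.cast_one] at h'
    have hdd' : ((dDeg E v : ℕ) : ℝ) = ((degI E 2 v : ℕ) : ℝ) + ((degI E 3 v : ℕ) : ℝ) := by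
      exact_mod_cast congrArg (fun k : ℕ => (k : ℝ)) hdd
    rw [he2v]
    push_cast at hdd' h ⊢
    linarith
  refine ⟨?_, hprt2⟩
  by_contra hcon
  push_neg at hcon
  obtain ⟨e, he, f, hf, h2e, h2f, hef, hndis⟩ := hcon
  obtain ⟨a, hae, haf⟩ := Finset.not_disjoint_iff.mp hndis
  obtain ⟨b, hba, heeq⟩ := other_of_pair h2e hae
  obtain ⟨c, hca, hfeq⟩ := other_of_pair h2f haf
  have hbc : b ≠ c := by
    rintro rfl
    exact hef (heeq.trans hfeq.symm)
  obtain ⟨hve, hveE⟩ := (mem_linkEdges_iff E v e).mp he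
  obtain ⟨hvf, hvfE⟩ := (mem_linkEdges_iff E v f).mp hf
  have hva : v ≠ a := fun h => hve (by rw [h]; exact hae)
  have hvb : v ≠ b := fun h => hve (by rw [h, heeq]; simp)
  have hvc : v ≠ c := fun h => hvf (by rw [h, hfeq]; simp)
  have hab : a ≠ b := Ne.symm hba
  have hac : a ≠ c := Ne.symm hca
  have hE1 : ({v, a, b} : Finset (Fin n)) ∈ E := by
    rw [heeq] at hveE; exact hveE
  have hE2 : ({v, a, c} : Finset (Fin n)) ∈ E := by
    rw [hfeq] at hvfE; exact hvfE
  set X := (univ.erase v).filter (fun x => ({v, x} : Finset (Fin n)) ∉ E) with hX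
  have hXN : degI E 2 v + X.card = n - 1 := by
    rw [degI2_eq, hX, Finset.card_filter_add_card_filter_not,
      Finset.card_erase_of_mem (Finset.mem_univ v), Finset.card_univ, Fintype.card_fin]
  have hL1 := phi_le E c (link_trans hC hB c)
  have hsub : (((linkEdges E c).filter (fun e => e.card = 2)).biUnion id) ⊆
      insert v (insert a (insert b X)) := by
    intro z hz
    obtain ⟨f', hf', hzf'⟩ := Finset.mem_biUnion.mp hz
    simp only [id] at hzf'
    have hf'' := Finset.mem_filter.mp hf'
    obtain ⟨hcf', hcf'E⟩ := (mem_linkEdges_iff E c f').mp hf''.1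
    simp only [Finset.mem_insert]
    by_cases hz1 : z = v
    · exact Or.inl hz1
    by_cases hz2 : z = a
    · exact Or.inr (Or.inl hz2)
    by_cases hz3 : z = b
    · exact Or.inr (Or.inr (Or.inl hz3))
    refine Or.inr (Or.inr (Or.inr ?_))
    rw [hX]
    refine Finset.mem_filter.mpr ⟨Finset.mem_erase.mpr ⟨hz1, Finset.mem_univ z⟩, ?_⟩
    intro hvzE
    obtain ⟨w, hwz, hf'eq⟩ := other_of_pair hf''.2 hzf'
    have hzc : z ≠ c := fun h => hcf' (by rw [← h]; exact hzf')
    have hwc : w ≠ c := fun h => hcf' (by rw [← h, hf'eq]; simp)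
    have hT : ({c, z, w} : Finset (Fin n)) ∈ E := by
      rw [hf'eq] at hcf'E; exact hcf'E
    exact claim4 hC hB hva hvb hvc hab hac hbc hE1 hE2 hz1 hz2 hz3 hzc
      (Ne.symm hwz) hwc hT hvzE
  have hcard_sub : ((((linkEdges E c).filter (fun e => e.card = 2)).biUnion id)).card ≤
      X.card + 3 := by
    have h0 := Finset.card_le_card hsub
    have i1 := Finset.card_insert_le v (insert a (insert b X))
    have i2 := Finset.card_insert_le a (insert b X)
    have i3 := Finset.card_insert_le b X
    omega
  have he2v' : e2 E v = degI E 3 v := he2v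
  have hmc := hmin c
  unfold rho at hmc
  have hnat : e2 E v + phi E v ≤ e2 E c + phi E c := by omega
  have hfinal : degI E 3 v + phi E v ≤ X.card + 3 := by
    rw [← he2v']
    exact le_trans hnat (le_trans hL1 hcard_sub)
  have hdv : dDeg E v ≤ n + 2 := by omega
  have hge := hdeg v
  have hle : ((dDeg E v : ℕ) : ℝ) ≤ (n : ℝ) + 2 := by exact_mod_cast hdv
  have hn100 : (100 : ℝ) ≤ (n : ℝ) := by exact_mod_cast hn
  linarith
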